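/- arXiv:1006.5551 — 2 statements merged into one kernel-verified Lean document; each statement's English description precedes it below -/
import Mathlib

section
/- For y in an admissible ball B (center c_B, radius r_B ≤ min(1, 1/|c_B|)) in ℝⁿ, one has |1 - e^{(c_B - y)·(c_B + y)}| ≤ C·r_B·(1 + |c_B|) for a dimensional constant C. Equivalently, |e^{|c_B|²}(e^{-|c_B|²} - e^{-|y|²})| ≤ C·r_B·(1 + |c_B|). -/
open MeasureTheory
open scoped ENNReal

/-- Gaussian density `γ₀(x) = π^{-n/2} e^{-|x|²}` on ℝⁿ. -/
noncomputable def gaussDensity (n : ℕ) (x : EuclideanSpace ℝ (Fin n)) : ℝ :=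
  Real.pi ^ (-(n : ℝ) / 2) * Real.exp (-‖x‖ ^ 2)

/-- The Gauss measure `γ` on ℝⁿ. -/
noncomputable def gaussMeasure (n : ℕ) : Measure (EuclideanSpace ℝ (Fin n)) :=
  volume.withDensity fun x => ENNReal.ofReal (gaussDensity n x)

/-- `mrad t = min(1, 1/t)`, equal to `1` when `t ≤ 1`. -/
noncomputable def mrad (t : ℝ) : ℝ := if t ≤ 1 then 1 else 1 / t

/-!
Since `y` lies within `r_B` of `c_B`, the exponent `⟪c_B - y, c_B + y⟫` is at most
`r_B (2|c_B| + r_B)` in absolute value. The admissibility condition gives `r_B ≤ 1` and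
`r_B |c_B| ≤ 1`, so the exponent is bounded by `3`, where `e^t - 1` is Lipschitz with
constant `e³`, and also by `2 r_B (1 + |c_B|)`.
-/

open scoped RealInnerProductSpace

lemma mrad_le_one (t : ℝ) : mrad t ≤ 1 := by
  unfold mrad
  split_ifs with h
  · exact le_rfl
  · rw [div_le_one (by linarith)]
    linarith

lemma mrad_mul_le_one (t : ℝ) : mrad t * t ≤ 1 := by
  unfold mrad
  split_ifs with h
  · linarith
  · rw [one_div_mul_cancel (by linarith)]

lemma Real.abs_exp_sub_one_le_exp_mul {a t : ℝ} (ha : 0 ≤ a) (hta : t ≤ a) :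
    |Real.exp t - 1| ≤ Real.exp a * |t| := by
  rcases le_or_gt t 0 with ht | ht
  · have hexp : Real.exp t ≤ 1 := Real.exp_le_one_iff.mpr ht
    rw [abs_of_nonpos (by linarith), abs_of_nonpos ht]
    nlinarith [Real.add_one_le_exp t, Real.one_le_exp ha]
  · have hexp : 1 ≤ Real.exp t := Real.one_le_exp ht.le
    -- multiply `1 - t ≤ e^{-t}` by `e^t`
    have hmul : Real.exp t - 1 ≤ t * Real.exp t := by
      have h := mul_le_mul_of_nonneg_left (Real.add_one_le_exp (-t)) (Real.exp_pos t).le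
      rw [← Real.exp_add, add_neg_cancel, Real.exp_zero] at h
      linarith
    rw [abs_of_nonneg (by linarith), abs_of_pos ht]
    nlinarith [Real.exp_le_exp.mpr hta]

lemma abs_inner_sub_add_le {E : Type*} [NormedAddCommGroup E] [InnerProductSpace ℝ E]
    (c y : E) : |⟪c - y, c + y⟫| ≤ ‖c - y‖ * (2 * ‖c‖ + ‖c - y‖) := by
  have hsum : ‖c + y‖ ≤ 2 * ‖c‖ + ‖c - y‖ :=
    calc ‖c + y‖ = ‖(2 : ℝ) • c - (c - y)‖ := by congr 1; module
      _ ≤ ‖(2 : ℝ) • c‖ + ‖c - y‖ := norm_sub_le _ _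
      _ = 2 * ‖c‖ + ‖c - y‖ := by rw [norm_smul, Real.norm_two]
  calc |⟪c - y, c + y⟫| ≤ ‖c - y‖ * ‖c + y‖ := abs_real_inner_le_norm _ _
    _ ≤ ‖c - y‖ * (2 * ‖c‖ + ‖c - y‖) := by gcongr

open scoped RealInnerProductSpace in
theorem stmt_6 (n : ℕ) :
    ∃ C > 0, ∀ (cB y : EuclideanSpace ℝ (Fin n)) (rB : ℝ),
      rB ≤ mrad ‖cB‖ → y ∈ Metric.closedBall cB rB →
      |1 - Real.exp ⟪cB - y, cB + y⟫| ≤ C * rB * (1 + ‖cB‖) := by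
  refine ⟨2 * Real.exp 3, by positivity, fun cB y rB hr hy => ?_⟩
  have hdist : ‖cB - y‖ ≤ rB := by rwa [Metric.mem_closedBall', dist_eq_norm] at hy
  have hr0 : 0 ≤ rB := (norm_nonneg _).trans hdist
  have hr1 : rB ≤ 1 := hr.trans (mrad_le_one _)
  have hrc : rB * ‖cB‖ ≤ 1 :=
    (mul_le_mul_of_nonneg_right hr (norm_nonneg _)).trans (mrad_mul_le_one _)
  have hexponent : |⟪cB - y, cB + y⟫| ≤ rB * (2 * ‖cB‖ + rB) :=
    (abs_inner_sub_add_le cB y).trans (by gcongr)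
  have hle3 : ⟪cB - y, cB + y⟫ ≤ 3 := by
    nlinarith [le_abs_self ⟪cB - y, cB + y⟫, mul_le_one₀ hr1 hr0 hr1]
  calc |1 - Real.exp ⟪cB - y, cB + y⟫|
      = |Real.exp ⟪cB - y, cB + y⟫ - 1| := abs_sub_comm _ _
    _ ≤ Real.exp 3 * |⟪cB - y, cB + y⟫| := Real.abs_exp_sub_one_le_exp_mul (by norm_num) hle3
    _ ≤ Real.exp 3 * (rB * (2 * ‖cB‖ + rB)) := by gcongr
    _ ≤ Real.exp 3 * (2 * rB * (1 + ‖cB‖)) := by gcongr 1; nlinarith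
    _ = 2 * Real.exp 3 * rB * (1 + ‖cB‖) := by ring
end

section
/- Let B and B' be two maximal admissible balls in ℝⁿ with centers on a common ray from the origin, with |c_{B'}| − 1/|c_{B'}| = |c_B| (so ∂B' contains c_B), and |c_B| ≥ 1. Then the largest ball contained in B ∩ B' has radius comparable to r_B: there exist dimensional constants 0 < c ≤ 1 such that B ∩ B' contains a ball of radius c·r_B, and consequently its Gaussian measure is comparable to γ(B). -/
/-!
Since `|c_{B'}| - r_{B'} = |c_B|`, the ball `B'` reaches back exactly to `c_B`, and as
`r_{B'} ≥ r_B / 2` the ball of radius `r_B / 4` centred at `c_B + (r_B / 4) u` lies in `B ∩ B'`.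
For the measures: on `B` the Gaussian density is at most its value at radius `|c_B| - r_B`, and on
the small ball at least its value at radius `|c_B| + r_B / 2`; because `|c_B| r_B = 1`, these two
values differ by a factor of at most `e³`, while the Lebesgue volumes differ by the factor `4ⁿ`.
-/
open MeasureTheory
open scoped ENNReal

open Metric

section GaussMeasure

variable {n : ℕ}

theorem measurable_gaussDensity (n : ℕ) : Measurable (gaussDensity n) := by
  unfold gaussDensity
  fun_prop

theorem gaussMeasure_apply (n : ℕ) (s : Set (EuclideanSpace ℝ (Fin n))) :
    gaussMeasure n s = ∫⁻ x in s, ENNReal.ofReal (gaussDensity n x) :=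
  withDensity_apply' _ s

theorem gaussMeasure_le_ofReal_mul_volume {s : Set (EuclideanSpace ℝ (Fin n))} {M : ℝ}
    (h : ∀ x ∈ s, gaussDensity n x ≤ M) :
    gaussMeasure n s ≤ ENNReal.ofReal M * volume s := by
  rw [gaussMeasure_apply, ← setLIntegral_const]
  exact setLIntegral_mono measurable_const fun x hx => ENNReal.ofReal_le_ofReal (h x hx)

theorem ofReal_mul_volume_le_gaussMeasure {s : Set (EuclideanSpace ℝ (Fin n))} {m : ℝ}
    (h : ∀ x ∈ s, m ≤ gaussDensity n x) :
    ENNReal.ofReal m * volume s ≤ gaussMeasure n s := by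
  rw [gaussMeasure_apply, ← setLIntegral_const]
  exact setLIntegral_mono (measurable_gaussDensity n).ennreal_ofReal
    fun x hx => ENNReal.ofReal_le_ofReal (h x hx)

theorem gaussDensity_le_of_le_norm {x : EuclideanSpace ℝ (Fin n)} {a : ℝ} (ha : 0 ≤ a)
    (h : a ≤ ‖x‖) : gaussDensity n x ≤ Real.pi ^ (-(n : ℝ) / 2) * Real.exp (-a ^ 2) := by
  unfold gaussDensity
  gcongr

theorem le_gaussDensity_of_norm_le {x : EuclideanSpace ℝ (Fin n)} {a : ℝ} (h : ‖x‖ ≤ a) :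
    Real.pi ^ (-(n : ℝ) / 2) * Real.exp (-a ^ 2) ≤ gaussDensity n x := by
  unfold gaussDensity
  gcongr

theorem gaussMeasure_closedBall_le {x : EuclideanSpace ℝ (Fin n)} {r : ℝ} (hr : r ≤ ‖x‖) :
    gaussMeasure n (closedBall x r) ≤
      ENNReal.ofReal (Real.pi ^ (-(n : ℝ) / 2) * Real.exp (-(‖x‖ - r) ^ 2)) *
        volume (closedBall x r) :=
  gaussMeasure_le_ofReal_mul_volume fun _ hy =>
    gaussDensity_le_of_le_norm (sub_nonneg.2 hr)
      (sub_le_iff_le_add.2 (norm_le_of_mem_closedBall (mem_closedBall_comm.1 hy)))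

theorem le_gaussMeasure_closedBall (x : EuclideanSpace ℝ (Fin n)) (r : ℝ) :
    ENNReal.ofReal (Real.pi ^ (-(n : ℝ) / 2) * Real.exp (-(‖x‖ + r) ^ 2)) *
        volume (closedBall x r) ≤ gaussMeasure n (closedBall x r) :=
  ofReal_mul_volume_le_gaussMeasure fun _ hy =>
    le_gaussDensity_of_norm_le (norm_le_of_mem_closedBall hy)

theorem volume_closedBall_mul (x z : EuclideanSpace ℝ (Fin n)) {c r : ℝ} (hc : 0 ≤ c)
    (hr : 0 ≤ r) :
    volume (closedBall z (c * r)) = ENNReal.ofReal (c ^ n) * volume (closedBall x r) := by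
  rw [Measure.addHaar_closedBall_mul _ z hc hr, Measure.addHaar_closedBall_center _ x,
    finrank_euclideanSpace_fin]

/-- The constant `e⁻³` comes from `(‖x‖ + r / 2)² - (‖x‖ - r)² = 3 ‖x‖ r - 3 r² / 4 ≤ 3`. -/
theorem ofReal_mul_gaussMeasure_closedBall_le {x z : EuclideanSpace ℝ (Fin n)} {c r : ℝ}
    (hc : 0 ≤ c) (hr : 0 ≤ r) (hrx : r ≤ ‖x‖) (hxr : ‖x‖ * r ≤ 1)
    (hz : ‖z‖ + c * r ≤ ‖x‖ + r / 2) :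
    ENNReal.ofReal (Real.exp (-3) * c ^ n) * gaussMeasure n (closedBall x r) ≤
      gaussMeasure n (closedBall z (c * r)) := by
  have hdensity : Real.exp (-3) * c ^ n * (Real.pi ^ (-(n : ℝ) / 2) * Real.exp (-(‖x‖ - r) ^ 2)) ≤
      Real.pi ^ (-(n : ℝ) / 2) * Real.exp (-(‖z‖ + c * r) ^ 2) * c ^ n := by
    have hexp : Real.exp (-3) * Real.exp (-(‖x‖ - r) ^ 2) ≤ Real.exp (-(‖z‖ + c * r) ^ 2) := by
      rw [← Real.exp_add, Real.exp_le_exp]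
      nlinarith [norm_nonneg z, mul_nonneg hc hr]
    calc _ = Real.pi ^ (-(n : ℝ) / 2) * (Real.exp (-3) * Real.exp (-(‖x‖ - r) ^ 2)) * c ^ n := by
          ring
      _ ≤ _ := by gcongr
  calc ENNReal.ofReal (Real.exp (-3) * c ^ n) * gaussMeasure n (closedBall x r)
      ≤ ENNReal.ofReal (Real.exp (-3) * c ^ n) *
          (ENNReal.ofReal (Real.pi ^ (-(n : ℝ) / 2) * Real.exp (-(‖x‖ - r) ^ 2)) *
            volume (closedBall x r)) := by
        gcongr
        exact gaussMeasure_closedBall_le hrx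
    _ ≤ ENNReal.ofReal (Real.pi ^ (-(n : ℝ) / 2) * Real.exp (-(‖z‖ + c * r) ^ 2) * c ^ n) *
          volume (closedBall x r) := by
        rw [← mul_assoc, ← ENNReal.ofReal_mul (by positivity)]
        gcongr
    _ = ENNReal.ofReal (Real.pi ^ (-(n : ℝ) / 2) * Real.exp (-(‖z‖ + c * r) ^ 2)) *
          volume (closedBall z (c * r)) := by
        rw [ENNReal.ofReal_mul (by positivity), mul_assoc, volume_closedBall_mul x z hc hr]
    _ ≤ gaussMeasure n (closedBall z (c * r)) := le_gaussMeasure_closedBall z (c * r)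

end GaussMeasure

section RayGeometry

variable {E : Type*} [NormedAddCommGroup E] [NormedSpace ℝ E] {u : E}

theorem dist_smul_smul_of_norm_eq_one (hu : ‖u‖ = 1) (s t : ℝ) :
    dist (s • u) (t • u) = |s - t| := by
  rw [dist_eq_norm, ← sub_smul, norm_smul, hu, mul_one, Real.norm_eq_abs]

theorem closedBall_subset_inter_closedBall_of_sub_inv_eq (hu : ‖u‖ = 1) {b b' : ℝ} (hb : 1 ≤ b)
    (hbb' : b < b') (heq : b' - 1 / b' = b) :
    closedBall ((b + 1 / 4 * (1 / b)) • u) (1 / 4 * (1 / b)) ⊆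
      closedBall (b • u) (1 / b) ∩ closedBall (b' • u) (1 / b') := by
  have hb0 : 0 < b := by linarith
  have hb'0 : 0 < b' := by linarith
  have hb'_le : b' ≤ 2 * b := by
    have : 1 / b' ≤ 1 := (div_le_one hb'0).2 (by linarith)
    linarith
  have hinv_half : 1 / 2 * (1 / b) ≤ 1 / b' := by
    calc 1 / 2 * (1 / b) = 1 / (2 * b) := by ring
      _ ≤ 1 / b' := one_div_le_one_div_of_le hb'0 hb'_le
  have hinv_pos : 0 < 1 / b := by positivity
  refine Set.subset_inter (closedBall_subset_closedBall' ?_) (closedBall_subset_closedBall' ?_)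
  · rw [dist_smul_smul_of_norm_eq_one hu, add_sub_cancel_left, abs_of_pos (by positivity)]
    linarith
  · rw [dist_smul_smul_of_norm_eq_one hu, abs_sub_comm, abs_of_nonneg (by linarith)]
    linarith

end RayGeometry

theorem stmt_19_general (n : ℕ) :
    ∃ c : ℝ, 0 < c ∧ c ≤ 1 ∧ ∃ κ : ℝ, 0 < κ ∧
      ∀ (u : EuclideanSpace ℝ (Fin n)) (b b' : ℝ),
        ‖u‖ = 1 → 1 ≤ b → b < b' → b' - 1 / b' = b →
        (∃ z, Metric.closedBall z (c * (1 / b)) ⊆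
            Metric.closedBall (b • u) (1 / b) ∩ Metric.closedBall (b' • u) (1 / b')) ∧
          ENNReal.ofReal κ * gaussMeasure n (Metric.closedBall (b • u) (1 / b)) ≤
            gaussMeasure n
              (Metric.closedBall (b • u) (1 / b) ∩ Metric.closedBall (b' • u) (1 / b')) ∧
          gaussMeasure n
              (Metric.closedBall (b • u) (1 / b) ∩ Metric.closedBall (b' • u) (1 / b')) ≤
            gaussMeasure n (Metric.closedBall (b • u) (1 / b)) := by
  refine ⟨1 / 4, by norm_num, by norm_num, Real.exp (-3) * (1 / 4) ^ n, by positivity, ?_⟩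
  intro u b b' hu hb hbb' heq
  have hsub := closedBall_subset_inter_closedBall_of_sub_inv_eq hu hb hbb' heq
  have hb0 : 0 < b := by linarith
  have norm_smul_u (t : ℝ) (ht : 0 ≤ t) : ‖t • u‖ = t := by
    rw [norm_smul, hu, mul_one, Real.norm_of_nonneg ht]
  have hgauss := ofReal_mul_gaussMeasure_closedBall_le (x := b • u)
    (z := (b + 1 / 4 * (1 / b)) • u) (c := 1 / 4) (r := 1 / b) (by norm_num) (by positivity)
    (by rw [norm_smul_u b hb0.le]; exact ((div_le_one hb0).2 hb).trans hb)
    (by rw [norm_smul_u b hb0.le, mul_one_div_cancel hb0.ne'])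
    (by rw [norm_smul_u _ (by positivity), norm_smul_u b hb0.le]; linarith)
  exact ⟨⟨_, hsub⟩, hgauss.trans (measure_mono hsub), measure_mono Set.inter_subset_left⟩

theorem stmt_19 (n : ℕ) (hn : 1 ≤ n) :
    ∃ c : ℝ, 0 < c ∧ c ≤ 1 ∧ ∃ κ : ℝ, 0 < κ ∧
      ∀ (u : EuclideanSpace ℝ (Fin n)) (b b' : ℝ),
        ‖u‖ = 1 → 1 ≤ b → b < b' → b' - 1 / b' = b →
        (∃ z, Metric.closedBall z (c * (1 / b)) ⊆
            Metric.closedBall (b • u) (1 / b) ∩ Metric.closedBall (b' • u) (1 / b')) ∧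
          ENNReal.ofReal κ * gaussMeasure n (Metric.closedBall (b • u) (1 / b)) ≤
            gaussMeasure n
              (Metric.closedBall (b • u) (1 / b) ∩ Metric.closedBall (b' • u) (1 / b')) ∧
          gaussMeasure n
              (Metric.closedBall (b • u) (1 / b) ∩ Metric.closedBall (b' • u) (1 / b')) ≤
            gaussMeasure n (Metric.closedBall (b • u) (1 / b)) :=
  stmt_19_general n
end
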